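/- Let P1 := (x1^3 − x2^3)·(x2^3 − x3^3)·(x3^3 − x1^3) and P2 := x1^3·x2^3·x3^3 in ℂ[x1, x2, x3]. Let t1, t2 ∈ ℂ with t1 ≠ 0, t2 ≠ 0, and t2^2 ≠ −27·t1^2. Then for every nonzero vector (a1, a2, a3) ∈ ℂ³, the polynomial t1·P1 + t2·P2 and all three of its partial derivatives vanish at (a1, a2, a3) if and only if exactly two of a1, a2, a3 are zero. (Equivalently, the singular locus of the projective plane curve {t1·P1 + t2·P2 = 0} consists of exactly the three points [1:0:0], [0:1:0], [0:0:1].) -/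
import Mathlib


open MvPolynomial

/-- `P1 = (x1³−x2³)(x2³−x3³)(x3³−x1³)` in `ℂ[x1, x2, x3]`
(variables `x1 = X 0`, `x2 = X 1`, `x3 = X 2`). -/
noncomputable def P1 : MvPolynomial (Fin 3) ℂ :=
  (X 0 ^ 3 - X 1 ^ 3) * (X 1 ^ 3 - X 2 ^ 3) * (X 2 ^ 3 - X 0 ^ 3)

/-- `P2 = x1³x2³x3³` in `ℂ[x1, x2, x3]`. -/
noncomputable def P2 : MvPolynomial (Fin 3) ℂ :=
  X 0 ^ 3 * X 1 ^ 3 * X 2 ^ 3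

lemma evalF (t1 t2 : ℂ) (a : Fin 3 → ℂ) :
    eval a (C t1 * P1 + C t2 * P2) =
      t1 * ((a 0 ^ 3 - a 1 ^ 3) * (a 1 ^ 3 - a 2 ^ 3) * (a 2 ^ 3 - a 0 ^ 3))
        + t2 * (a 0 ^ 3 * a 1 ^ 3 * a 2 ^ 3) := by
  simp [P1, P2]

lemma evalD0 (t1 t2 : ℂ) (a : Fin 3 → ℂ) :
    eval a (pderiv 0 (C t1 * P1 + C t2 * P2)) =
      3 * a 0 ^ 2 * (t1 * ((a 1 ^ 3 - a 2 ^ 3) * ((a 2 ^ 3 - a 0 ^ 3) - (a 0 ^ 3 - a 1 ^ 3)))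
        + t2 * (a 1 ^ 3 * a 2 ^ 3)) := by
  simp [P1, P2, pderiv_mul, pderiv_pow, pderiv_X, Pi.single_apply]
  ring

lemma evalD1 (t1 t2 : ℂ) (a : Fin 3 → ℂ) :
    eval a (pderiv 1 (C t1 * P1 + C t2 * P2)) =
      3 * a 1 ^ 2 * (t1 * ((a 2 ^ 3 - a 0 ^ 3) * ((a 0 ^ 3 - a 1 ^ 3) - (a 1 ^ 3 - a 2 ^ 3)))
        + t2 * (a 0 ^ 3 * a 2 ^ 3)) := by
  simp [P1, P2, pderiv_mul, pderiv_pow, pderiv_X, Pi.single_apply]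
  ring

lemma evalD2 (t1 t2 : ℂ) (a : Fin 3 → ℂ) :
    eval a (pderiv 2 (C t1 * P1 + C t2 * P2)) =
      3 * a 2 ^ 2 * (t1 * ((a 0 ^ 3 - a 1 ^ 3) * ((a 1 ^ 3 - a 2 ^ 3) - (a 2 ^ 3 - a 0 ^ 3)))
        + t2 * (a 0 ^ 3 * a 1 ^ 3)) := by
  simp [P1, P2, pderiv_mul, pderiv_pow, pderiv_X, Pi.single_apply]
  ring

/-- For parameters `t1 ≠ 0`, `t2 ≠ 0` with `t2² ≠ −27 t1²`, the singular locus of the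
plane curve `{t1·P1 + t2·P2 = 0} ⊂ ℙ²` consists exactly of the three coordinate points:
for a nonzero `a ∈ ℂ³`, the polynomial and its three partial derivatives all vanish at
`a` iff exactly two of the coordinates of `a` are zero. -/
theorem stmt_9 (t1 t2 : ℂ) (ht1 : t1 ≠ 0) (ht2 : t2 ≠ 0)
    (ht : t2 ^ 2 ≠ -27 * t1 ^ 2) (a : Fin 3 → ℂ) (ha : a ≠ 0) :
    (eval a (C t1 * P1 + C t2 * P2) = 0 ∧
      ∀ i : Fin 3, eval a (pderiv i (C t1 * P1 + C t2 * P2)) = 0) ↔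
    ((a 0 = 0 ∧ a 1 = 0 ∧ a 2 ≠ 0) ∨ (a 0 = 0 ∧ a 1 ≠ 0 ∧ a 2 = 0) ∨
      (a 0 ≠ 0 ∧ a 1 = 0 ∧ a 2 = 0)) := by
  have ha' : ¬ (a 0 = 0 ∧ a 1 = 0 ∧ a 2 = 0) := by
    rintro ⟨h0, h1, h2⟩
    apply ha
    funext i
    fin_cases i <;> assumption
  constructor
  · rintro ⟨hF, hD⟩
    rw [evalF] at hF
    have hA := hD 0; rw [evalD0] at hA
    have hB := hD 1; rw [evalD1] at hB
    have hC := hD 2; rw [evalD2] at hC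
    set u := a 0 ^ 3 with hu
    set v := a 1 ^ 3 with hv
    set w := a 2 ^ 3 with hw
    by_cases h0 : a 0 = 0 <;> by_cases h1 : a 1 = 0 <;> by_cases h2 : a 2 = 0
    · exact absurd ⟨h0, h1, h2⟩ ha'
    · exact Or.inl ⟨h0, h1, h2⟩
    · exact Or.inr (Or.inl ⟨h0, h1, h2⟩)
    · -- a 0 = 0, a 1 ≠ 0, a 2 ≠ 0 : contradiction
      exfalso
      have hv' : v ≠ 0 := pow_ne_zero 3 h1
      have hw' : w ≠ 0 := pow_ne_zero 3 h2
      have hu' : u = 0 := by rw [hu, h0]; ring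
      rw [hu'] at hF hB
      have hvw : v - w = 0 := by
        have h' : (t1 * (v * w)) * (v - w) = 0 := by linear_combination -hF
        exact (mul_eq_zero.mp h').resolve_left
          (mul_ne_zero ht1 (mul_ne_zero hv' hw'))
      have hz : (t1 * (a 1 ^ 2 * w)) * w = 0 := by
        linear_combination (-(1:ℂ)/3) * hB - 2 * a 1 ^ 2 * t1 * w * hvw
      exact absurd hz (mul_ne_zero
        (mul_ne_zero ht1 (mul_ne_zero (pow_ne_zero 2 h1) hw')) hw')
    · exact Or.inr (Or.inr ⟨h0, h1, h2⟩)
    · -- a 1 = 0, a 0 ≠ 0, a 2 ≠ 0 : contradiction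
      exfalso
      have hu' : u ≠ 0 := pow_ne_zero 3 h0
      have hw' : w ≠ 0 := pow_ne_zero 3 h2
      have hv' : v = 0 := by rw [hv, h1]; ring
      rw [hv'] at hF hC
      have hwu : w - u = 0 := by
        have h' : (t1 * (w * u)) * (w - u) = 0 := by linear_combination -hF
        exact (mul_eq_zero.mp h').resolve_left
          (mul_ne_zero ht1 (mul_ne_zero hw' hu'))
      have hz : (t1 * (a 2 ^ 2 * u)) * u = 0 := by
        linear_combination (-(1:ℂ)/3) * hC - 2 * a 2 ^ 2 * t1 * u * hwu
      exact absurd hz (mul_ne_zero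
        (mul_ne_zero ht1 (mul_ne_zero (pow_ne_zero 2 h2) hu')) hu')
    · -- a 2 = 0, a 0 ≠ 0, a 1 ≠ 0 : contradiction
      exfalso
      have hu' : u ≠ 0 := pow_ne_zero 3 h0
      have hv' : v ≠ 0 := pow_ne_zero 3 h1
      have hw' : w = 0 := by rw [hw, h2]; ring
      rw [hw'] at hF hA
      have huv : u - v = 0 := by
        have h' : (t1 * (u * v)) * (u - v) = 0 := by linear_combination -hF
        exact (mul_eq_zero.mp h').resolve_left
          (mul_ne_zero ht1 (mul_ne_zero hu' hv'))
      have hz : (t1 * (a 0 ^ 2 * v)) * v = 0 := by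
        linear_combination (-(1:ℂ)/3) * hA - 2 * a 0 ^ 2 * t1 * v * huv
      exact absurd hz (mul_ne_zero
        (mul_ne_zero ht1 (mul_ne_zero (pow_ne_zero 2 h0) hv')) hv')
    · -- all nonzero : contradiction
      exfalso
      have hu' : u ≠ 0 := pow_ne_zero 3 h0
      have hv' : v ≠ 0 := pow_ne_zero 3 h1
      have hw' : w ≠ 0 := pow_ne_zero 3 h2
      have he3 : u * v * w ≠ 0 := mul_ne_zero (mul_ne_zero hu' hv') hw'
      have hA' : t1 * ((v - w) * ((w - u) - (u - v))) + t2 * (v * w) = 0 := by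
        have h3 : (3 : ℂ) * a 0 ^ 2 ≠ 0 := mul_ne_zero three_ne_zero (pow_ne_zero 2 h0)
        exact (mul_eq_zero.mp hA).resolve_left h3
      have hB' : t1 * ((w - u) * ((u - v) - (v - w))) + t2 * (u * w) = 0 := by
        have h3 : (3 : ℂ) * a 1 ^ 2 ≠ 0 := mul_ne_zero three_ne_zero (pow_ne_zero 2 h1)
        exact (mul_eq_zero.mp hB).resolve_left h3
      have hC' : t1 * ((u - v) * ((v - w) - (w - u))) + t2 * (u * v) = 0 := by
        have h3 : (3 : ℂ) * a 2 ^ 2 ≠ 0 := mul_ne_zero three_ne_zero (pow_ne_zero 2 h2)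
        exact (mul_eq_zero.mp hC).resolve_left h3
      have he2 : u * v + v * w + w * u = 0 := by
        have h' : t2 * (u * v + v * w + w * u) = 0 := by
          linear_combination hA' + hB' + hC'
        exact (mul_eq_zero.mp h').resolve_left ht2
      have he1 : u + v + w = 0 := by
        have h' : (t2 * (u * v * w)) * (u + v + w) = 0 := by
          linear_combination - (v*w) * hA' - (w*u) * hB' - (u*v) * hC'
            - (u+v+w) * hF + (t2 * (u*v + v*w + w*u)) * he2
        exact (mul_eq_zero.mp h').resolve_left (mul_ne_zero ht2 he3)
      apply ht
      have hsq : (t2 ^ 2 - (-27 * t1 ^ 2)) * ((u * v * w) * (u * v * w)) = 0 := by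
        linear_combination (t2 * (u*v*w) - t1 * ((u-v)*(v-w)*(w-u))) * hF
          + t1 ^ 2 * ((-4*(u+v+w)^2*(u*v*w) + 18*(u*v+v*w+w*u)*(u*v*w)) * he1
            + ((u+v+w)^2*(u*v+v*w+w*u) - 4*(u*v+v*w+w*u)^2) * he2)
      have := (mul_eq_zero.mp hsq).resolve_right (mul_ne_zero he3 he3)
      linear_combination this
  · intro h
    have hz : (a 0 = 0 ∧ a 1 = 0) ∨ (a 0 = 0 ∧ a 2 = 0) ∨ (a 1 = 0 ∧ a 2 = 0) := by
      rcases h with ⟨h0, h1, -⟩ | ⟨h0, -, h2⟩ | ⟨-, h1, h2⟩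
      · exact Or.inl ⟨h0, h1⟩
      · exact Or.inr (Or.inl ⟨h0, h2⟩)
      · exact Or.inr (Or.inr ⟨h1, h2⟩)
    have d0 : eval a (pderiv (0 : Fin 3) (C t1 * P1 + C t2 * P2)) = 0 := by
      rw [evalD0]
      rcases hz with ⟨h0, h1⟩ | ⟨h0, h2⟩ | ⟨h1, h2⟩ <;>
        [rw [h0, h1]; rw [h0, h2]; rw [h1, h2]] <;> ring
    have d1 : eval a (pderiv (1 : Fin 3) (C t1 * P1 + C t2 * P2)) = 0 := by
      rw [evalD1]
      rcases hz with ⟨h0, h1⟩ | ⟨h0, h2⟩ | ⟨h1, h2⟩ <;>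
        [rw [h0, h1]; rw [h0, h2]; rw [h1, h2]] <;> ring
    have d2 : eval a (pderiv (2 : Fin 3) (C t1 * P1 + C t2 * P2)) = 0 := by
      rw [evalD2]
      rcases hz with ⟨h0, h1⟩ | ⟨h0, h2⟩ | ⟨h1, h2⟩ <;>
        [rw [h0, h1]; rw [h0, h2]; rw [h1, h2]] <;> ring
    refine ⟨?_, ?_⟩
    · rw [evalF]
      rcases hz with ⟨h0, h1⟩ | ⟨h0, h2⟩ | ⟨h1, h2⟩ <;>
        [rw [h0, h1]; rw [h0, h2]; rw [h1, h2]] <;> ring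
    · intro i
      fin_cases i
      · exact d0
      · exact d1
      · exact d2
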